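/- Let p : {0,1}^n → ℝ be a polynomial of degree at most d (i.e., its Fourier expansion over 𝔽₂ⁿ is supported on characters χ_ξ with Hamming weight |ξ| ≤ d). Then E_{x}[|p(x)|] ≥ 3^{-d} · (E_x[|p(x)|²])^{1/2}, where x is uniform on {0,1}^n. -/

import Mathlib

open Finset

/-- The character of `𝔽₂ⁿ` indexed by `ξ`, as a real-valued function. -/
noncomputable def chi {n : ℕ} (ξ x : Fin n → ZMod 2) : ℝ :=
  if (∑ i, ξ i * x i : ZMod 2) = 0 then 1 else -1

/-- Expectation over the uniform measure on `{0,1}ⁿ`. -/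
noncomputable def cubeExp {n : ℕ} (f : (Fin n → ZMod 2) → ℝ) : ℝ :=
  (∑ x : Fin n → ZMod 2, f x) / 2 ^ n

/-- Fourier coefficient of `f` at `ξ`. -/
noncomputable def fCoeff {n : ℕ} (f : (Fin n → ZMod 2) → ℝ) (ξ : Fin n → ZMod 2) : ℝ :=
  cubeExp (fun x => f x * chi ξ x)

/-- Hamming weight of `ξ ∈ 𝔽₂ⁿ`. -/
def hamming {n : ℕ} (ξ : Fin n → ZMod 2) : ℕ :=
  (Finset.univ.filter fun i => ξ i ≠ 0).card

/-- `p` is a polynomial of degree at most `d` on the Boolean cube: its Fourier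
expansion is supported on characters of Hamming weight at most `d`. -/
def IsDegLE {n : ℕ} (d : ℕ) (p : (Fin n → ZMod 2) → ℝ) : Prop :=
  ∃ c : (Fin n → ZMod 2) → ℝ, (∀ ξ, c ξ ≠ 0 → hamming ξ ≤ d) ∧
    ∀ x, p x = ∑ ξ, c ξ * chi ξ x

set_option maxHeartbeats 1000000

lemma chi_cases {n : ℕ} (ξ x : Fin n → ZMod 2) : chi ξ x = 1 ∨ chi ξ x = -1 := by
  unfold chi; split <;> simp

lemma chi_sq {n : ℕ} (ξ x : Fin n → ZMod 2) : chi ξ x ^ 2 = 1 := by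
  rcases chi_cases ξ x with h | h <;> rw [h] <;> norm_num

lemma chi_add_right {n : ℕ} (ξ x y : Fin n → ZMod 2) :
    chi ξ (x + y) = chi ξ x * chi ξ y := by
  unfold chi
  have h : (∑ i, ξ i * (x + y) i : ZMod 2) = (∑ i, ξ i * x i) + ∑ i, ξ i * y i := by
    rw [← Finset.sum_add_distrib]
    exact Finset.sum_congr rfl fun i _ => by simp [mul_add]
  rw [h]
  generalize (∑ i, ξ i * x i : ZMod 2) = a
  generalize (∑ i, ξ i * y i : ZMod 2) = b
  have h2 : ∀ z : ZMod 2, z = 0 ∨ z = 1 := by decide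
  rcases h2 a with ha | ha <;> rcases h2 b with hb | hb <;> subst ha <;> subst hb <;> norm_num <;> (try decide)

lemma chi_comm {n : ℕ} (ξ x : Fin n → ZMod 2) : chi ξ x = chi x ξ := by
  unfold chi
  congr 1
  simp [mul_comm]

lemma chi_add_left {n : ℕ} (ξ η x : Fin n → ZMod 2) :
    chi (ξ + η) x = chi ξ x * chi η x := by
  rw [chi_comm, chi_add_right, chi_comm x ξ, chi_comm x η]

lemma chi_zero {n : ℕ} (x : Fin n → ZMod 2) : chi 0 x = 1 := by
  unfold chi
  simp

lemma chi_single {n : ℕ} (ξ : Fin n → ZMod 2) (i : Fin n) :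
    chi ξ (Pi.single i 1) = if ξ i = 0 then 1 else -1 := by
  unfold chi
  congr 1
  rw [Finset.sum_eq_single i]
  · simp
  · intro j _ hj; simp [Pi.single_apply, hj]
  · simp

lemma cubeExp_add {n : ℕ} (f g : (Fin n → ZMod 2) → ℝ) :
    cubeExp (fun x => f x + g x) = cubeExp f + cubeExp g := by
  unfold cubeExp; rw [Finset.sum_add_distrib, add_div]

lemma cubeExp_mul_const {n : ℕ} (a : ℝ) (f : (Fin n → ZMod 2) → ℝ) :
    cubeExp (fun x => a * f x) = a * cubeExp f := by
  unfold cubeExp; rw [← Finset.mul_sum, mul_div_assoc]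

lemma cubeExp_const {n : ℕ} (a : ℝ) : cubeExp (fun _ : Fin n → ZMod 2 => a) = a := by
  unfold cubeExp
  rw [Finset.sum_const]
  simp [Fintype.card_fun]

lemma cubeExp_nonneg {n : ℕ} {f : (Fin n → ZMod 2) → ℝ} (hf : ∀ x, 0 ≤ f x) :
    0 ≤ cubeExp f :=
  div_nonneg (Finset.sum_nonneg fun x _ => hf x) (by positivity)

lemma cubeExp_flip_zero {n : ℕ} (i : Fin n) (f : (Fin n → ZMod 2) → ℝ)
    (hf : ∀ x, f (x + Pi.single i 1) = - f x) : cubeExp f = 0 := by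
  have h : (∑ x : Fin n → ZMod 2, f x) = ∑ x : Fin n → ZMod 2, f (x + Pi.single i 1) :=
    (Fintype.sum_equiv (Equiv.addRight (Pi.single i 1)) _ _ (fun x => rfl)).symm
  have h2 : (∑ x : Fin n → ZMod 2, f x) = 0 := by
    have := h
    simp only [hf, Finset.sum_neg_distrib] at this
    linarith
  unfold cubeExp; rw [h2]; simp

lemma cubeExp_sq_CS {n : ℕ} (f g : (Fin n → ZMod 2) → ℝ) :
    (cubeExp (fun x => f x * g x)) ^ 2 ≤
      cubeExp (fun x => f x ^ 2) * cubeExp (fun x => g x ^ 2) := by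
  unfold cubeExp
  rw [div_pow, div_mul_div_comm]
  have hpos : (0:ℝ) < 2 ^ n * 2 ^ n := by positivity
  have h2 : ((2:ℝ) ^ n) ^ 2 = 2 ^ n * 2 ^ n := by ring
  rw [h2]
  exact div_le_div_of_nonneg_right (Finset.sum_mul_sq_le_sq_mul_sq _ _ _) hpos.le

lemma chi_flip {n : ℕ} (ξ : Fin n → ZMod 2) {i : Fin n} (h : ξ i = 0)
    (x : Fin n → ZMod 2) : chi ξ (x + Pi.single i 1) = chi ξ x := by
  rw [chi_add_right, chi_single, if_pos h, mul_one]

lemma chi_flip_neg {n : ℕ} (i : Fin n) (x : Fin n → ZMod 2) :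
    chi (Pi.single i 1) (x + Pi.single i 1) = - chi (Pi.single i 1) x := by
  rw [chi_add_right, chi_single, if_neg (by simp)]
  ring

lemma hamming_add_single {n : ℕ} (ξ : Fin n → ZMod 2) (i : Fin n) (h : ξ i = 0) :
    hamming (ξ + Pi.single i 1) = hamming ξ + 1 := by
  set η : Fin n → ZMod 2 := ξ + Pi.single i 1 with hη
  have hset : (univ.filter fun j => η j ≠ 0) = insert i (univ.filter fun j => ξ j ≠ 0) := by
    ext j
    simp only [Finset.mem_filter, Finset.mem_insert, Finset.mem_univ, true_and]
    have hval : η j = ξ j + (if j = i then 1 else 0) := by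
      rw [hη, Pi.add_apply, Pi.single_apply]
    by_cases hj : j = i
    · subst hj
      rw [hval, if_pos rfl, h, zero_add]
      simp
    · rw [hval, if_neg hj, add_zero]
      simp [hj]
  unfold hamming
  rw [hset, Finset.card_insert_of_notMem (by simp [h])]

lemma bonami {n : ℕ} (S : Finset (Fin n)) :
    ∀ (d : ℕ) (c : (Fin n → ZMod 2) → ℝ) (p : (Fin n → ZMod 2) → ℝ),
      (∀ x, p x = ∑ ξ, c ξ * chi ξ x) →
      (∀ ξ, c ξ ≠ 0 → hamming ξ ≤ d ∧ ∀ j, ξ j ≠ 0 → j ∈ S) →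
      cubeExp (fun x => p x ^ 4) ≤ 9 ^ d * (cubeExp (fun x => p x ^ 2)) ^ 2 := by
  induction S using Finset.induction_on with
  | empty =>
    intro d c p hpc hc
    have hp : ∀ x, p x = c 0 := by
      intro x
      rw [hpc x, Finset.sum_eq_single 0]
      · rw [chi_zero, mul_one]
      · intro ξ _ hξ
        by_cases h : c ξ = 0
        · rw [h, zero_mul]
        · exfalso; apply hξ; funext j
          by_contra hj
          exact absurd ((hc ξ h).2 j hj) (Finset.notMem_empty j)
      · simp
    simp only [hp]
    rw [cubeExp_const, cubeExp_const]
    have h1 : (1:ℝ) ≤ 9 ^ d := one_le_pow₀ (by norm_num)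
    nlinarith [sq_nonneg (c 0 ^ 2)]
  | @insert i T hiT ih =>
    intro d c p hpc hc
    set δ : Fin n → ZMod 2 := Pi.single i 1 with hδ
    have hδi : δ i = 1 := Pi.single_eq_same i 1
    set a : (Fin n → ZMod 2) → ℝ := fun ξ => if ξ i = 0 then c ξ else 0 with ha
    set b : (Fin n → ZMod 2) → ℝ := fun ξ => if ξ i = 0 then c (ξ + δ) else 0 with hb
    set q : (Fin n → ZMod 2) → ℝ := fun x => ∑ ξ, a ξ * chi ξ x with hq
    set r : (Fin n → ZMod 2) → ℝ := fun x => ∑ ξ, b ξ * chi ξ x with hr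
    have hham : ∀ ξ : Fin n → ZMod 2, ξ i = 0 → hamming (ξ + δ) = hamming ξ + 1 := by
      intro ξ h0; rw [hδ]; exact hamming_add_single ξ i h0
    have hcflip : ∀ (ξ x : Fin n → ZMod 2), ξ i = 0 → chi ξ (x + δ) = chi ξ x := by
      intro ξ x h0; rw [hδ]; exact chi_flip ξ h0 x
    have hsflip : ∀ x, chi δ (x + δ) = - chi δ x := by
      intro x; rw [hδ]; exact chi_flip_neg i x
    -- split p = q + χ_δ · r
    have hsplit : ∀ x, p x = q x + chi δ x * r x := by
      intro x
      have h1 : chi δ x * r x = ∑ ξ, (if ξ i = 1 then c ξ else 0) * chi ξ x := by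
        rw [hr, Finset.mul_sum]
        have hterm : ∀ ξ, chi δ x * (b ξ * chi ξ x) = b ξ * chi (ξ + δ) x := by
          intro ξ; rw [chi_add_left]; ring
        simp only [hterm]
        apply Fintype.sum_equiv (Equiv.addRight δ)
        intro ξ
        simp only [Equiv.coe_addRight]
        congr 1
        simp only [hb]
        have e3 : (ξ + δ) i = ξ i + 1 := by rw [Pi.add_apply, hδi]
        simp only [e3]
        have h2 : ∀ z : ZMod 2, (z + 1 = 1) ↔ (z = 0) := by decide
        by_cases h0 : ξ i = 0
        · rw [if_pos h0, if_pos ((h2 _).mpr h0)]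
        · rw [if_neg h0, if_neg (fun hcon => h0 ((h2 _).mp hcon))]
      rw [hpc x, h1]
      simp only [hq]
      rw [← Finset.sum_add_distrib]
      apply Finset.sum_congr rfl
      intro ξ _
      rw [← add_mul]
      congr 1
      simp only [ha]
      by_cases h0 : ξ i = 0
      · rw [if_pos h0, if_neg (by rw [h0]; decide), add_zero]
      · have h1' : ξ i = 1 := by
          have h2 : ∀ z : ZMod 2, z ≠ 0 → z = 1 := by decide
          exact h2 _ h0
        rw [if_neg h0, if_pos h1', zero_add]
    -- support conditions
    have hA : ∀ ξ, a ξ ≠ 0 → hamming ξ ≤ d ∧ ∀ j, ξ j ≠ 0 → j ∈ T := by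
      intro ξ hξ
      simp only [ha] at hξ
      by_cases h0 : ξ i = 0
      · rw [if_pos h0] at hξ
        obtain ⟨h1, h2⟩ := hc ξ hξ
        refine ⟨h1, fun j hj => ?_⟩
        rcases Finset.mem_insert.mp (h2 j hj) with he | ht
        · exact absurd (he ▸ h0) hj
        · exact ht
      · rw [if_neg h0] at hξ; exact absurd rfl hξ
    have hB : ∀ ξ, b ξ ≠ 0 → hamming ξ ≤ d - 1 ∧ ∀ j, ξ j ≠ 0 → j ∈ T := by
      intro ξ hξ
      simp only [hb] at hξ
      by_cases h0 : ξ i = 0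
      · rw [if_pos h0] at hξ
        obtain ⟨h1, h2⟩ := hc _ hξ
        rw [hham ξ h0] at h1
        constructor
        · omega
        · intro j hj
          have hji : j ≠ i := fun he => hj (he ▸ h0)
          have hj' : (ξ + δ) j ≠ 0 := by
            rw [Pi.add_apply, hδ, Pi.single_apply, if_neg hji, add_zero]
            exact hj
          rcases Finset.mem_insert.mp (h2 j hj') with he | ht
          · exact absurd he hji
          · exact ht
      · rw [if_neg h0] at hξ; exact absurd rfl hξ
    have hq4 := ih d a q (fun _ => rfl) hA
    have hr4 := ih (d - 1) b r (fun _ => rfl) hB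
    -- invariance under flipping coordinate i
    have hqflip : ∀ x, q x = q (x + δ) := by
      intro x
      rw [hq]
      apply Finset.sum_congr rfl
      intro ξ _
      by_cases h0 : ξ i = 0
      · rw [hcflip ξ x h0]
      · simp only [ha, if_neg h0, zero_mul]
    have hrflip : ∀ x, r x = r (x + δ) := by
      intro x
      rw [hr]
      apply Finset.sum_congr rfl
      intro ξ _
      by_cases h0 : ξ i = 0
      · rw [hcflip ξ x h0]
      · simp only [hb, if_neg h0, zero_mul]
    -- expectation identities
    have hP2 : cubeExp (fun x => p x ^ 2)
        = cubeExp (fun x => q x ^ 2) + cubeExp (fun x => r x ^ 2) := by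
      have hfun : (fun x => p x ^ 2)
          = fun x => (q x ^ 2 + r x ^ 2) + (2 * (q x * r x)) * chi δ x := by
        funext x
        rw [hsplit x]
        linear_combination (r x ^ 2) * chi_sq δ x
      rw [hfun]
      rw [cubeExp_add (fun x => q x ^ 2 + r x ^ 2) (fun x => (2 * (q x * r x)) * chi δ x)]
      rw [cubeExp_flip_zero i (fun x => (2 * (q x * r x)) * chi δ x) (fun x => by
        rw [← hδ]; rw [← hqflip x, ← hrflip x, hsflip x]; ring)]
      rw [add_zero, cubeExp_add (fun x => q x ^ 2) (fun x => r x ^ 2)]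
    have hP4 : cubeExp (fun x => p x ^ 4)
        = cubeExp (fun x => q x ^ 4) + cubeExp (fun x => r x ^ 4)
          + 6 * cubeExp (fun x => q x ^ 2 * r x ^ 2) := by
      have hfun : (fun x => p x ^ 4)
          = fun x => (q x ^ 4 + (r x ^ 4 + 6 * (q x ^ 2 * r x ^ 2)))
              + (4 * (q x ^ 3 * r x) + 4 * (q x * r x ^ 3)) * chi δ x := by
        funext x
        rw [hsplit x]
        linear_combination (6 * q x ^ 2 * r x ^ 2 + 4 * q x * r x ^ 3 * chi δ x
          + r x ^ 4 * (chi δ x ^ 2 + 1)) * chi_sq δ x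
      rw [hfun]
      rw [cubeExp_add (fun x => q x ^ 4 + (r x ^ 4 + 6 * (q x ^ 2 * r x ^ 2)))
        (fun x => (4 * (q x ^ 3 * r x) + 4 * (q x * r x ^ 3)) * chi δ x)]
      rw [cubeExp_flip_zero i (fun x => (4 * (q x ^ 3 * r x) + 4 * (q x * r x ^ 3)) * chi δ x)
        (fun x => by rw [← hδ]; rw [← hqflip x, ← hrflip x, hsflip x]; ring)]
      rw [add_zero, cubeExp_add (fun x => q x ^ 4) (fun x => r x ^ 4 + 6 * (q x ^ 2 * r x ^ 2))]
      rw [cubeExp_add (fun x => r x ^ 4) (fun x => 6 * (q x ^ 2 * r x ^ 2))]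
      rw [cubeExp_mul_const 6 (fun x => q x ^ 2 * r x ^ 2)]
      ring
    set Q2 := cubeExp (fun x => q x ^ 2) with hQ2
    set R2 := cubeExp (fun x => r x ^ 2) with hR2
    set Q4 := cubeExp (fun x => q x ^ 4) with hQ4
    set R4 := cubeExp (fun x => r x ^ 4) with hR4
    set QR := cubeExp (fun x => q x ^ 2 * r x ^ 2) with hQR
    have hQ2n : 0 ≤ Q2 := cubeExp_nonneg (fun x => by positivity)
    have hR2n : 0 ≤ R2 := cubeExp_nonneg (fun x => by positivity)
    have hQ4n : 0 ≤ Q4 := cubeExp_nonneg (fun x => by positivity)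
    have hR4n : 0 ≤ R4 := cubeExp_nonneg (fun x => by positivity)
    have hQRn : 0 ≤ QR := cubeExp_nonneg (fun x => by positivity)
    have hCS : QR ^ 2 ≤ Q4 * R4 := by
      have h := cubeExp_sq_CS (fun x => q x ^ 2) (fun x => r x ^ 2)
      have e1 : (fun x => (q x ^ 2) ^ 2) = fun x => q x ^ 4 := by funext x; ring
      have e2 : (fun x => (r x ^ 2) ^ 2) = fun x => r x ^ 4 := by funext x; ring
      rw [e1, e2] at h
      exact h
    by_cases hd : d = 0
    · subst hd
      have hb0 : ∀ ξ, b ξ = 0 := by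
        intro ξ
        simp only [hb]
        by_cases h0 : ξ i = 0
        · rw [if_pos h0]
          by_contra hcne
          have h1 := (hc _ hcne).1
          rw [hham ξ h0] at h1
          omega
        · rw [if_neg h0]
      have hr0 : ∀ x, r x = 0 := by
        intro x; rw [hr]
        apply Finset.sum_eq_zero
        intro ξ _; rw [hb0 ξ, zero_mul]
      have hpq : ∀ x, p x = q x := by
        intro x; rw [hsplit x, hr0 x, mul_zero, add_zero]
      simp only [hpq]
      exact hq4
    · set e := d - 1 with he
      have hd1 : e + 1 = d := by omega
      set u : ℝ := 3 ^ e with hu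
      have h33 : ∀ m : ℕ, ((3:ℝ) ^ m) ^ 2 = 9 ^ m := by
        intro m; rw [← pow_mul, mul_comm, pow_mul]; norm_num
      have h9e : (9:ℝ) ^ e = u ^ 2 := by rw [hu]; exact (h33 e).symm
      have h9d : (9:ℝ) ^ d = 9 * u ^ 2 := by
        rw [← hd1, pow_succ, h9e]; ring
      have hq4' : Q4 ≤ 9 * u ^ 2 * Q2 ^ 2 := by rw [← h9d]; exact hq4
      have hr4' : R4 ≤ u ^ 2 * R2 ^ 2 := by rw [← h9e]; exact hr4
      have hX : (0:ℝ) ≤ 9 * u ^ 2 * Q2 ^ 2 := by positivity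
      have hQRsq : QR ^ 2 ≤ (3 * u ^ 2 * (Q2 * R2)) ^ 2 := by
        calc QR ^ 2 ≤ Q4 * R4 := hCS
          _ ≤ (9 * u ^ 2 * Q2 ^ 2) * R4 := mul_le_mul_of_nonneg_right hq4' hR4n
          _ ≤ (9 * u ^ 2 * Q2 ^ 2) * (u ^ 2 * R2 ^ 2) := mul_le_mul_of_nonneg_left hr4' hX
          _ = (3 * u ^ 2 * (Q2 * R2)) ^ 2 := by ring
      have hY : (0:ℝ) ≤ 3 * u ^ 2 * (Q2 * R2) :=
        mul_nonneg (by positivity) (mul_nonneg hQ2n hR2n)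
      have hQRle : QR ≤ 3 * u ^ 2 * (Q2 * R2) := by nlinarith [hQRsq, hQRn, hY]
      rw [hP4, hP2, h9d]
      nlinarith [hq4', hr4', hQRle, hQ2n, hR2n,
        mul_nonneg (sq_nonneg u) (sq_nonneg R2),
        mul_nonneg (mul_nonneg hQ2n hR2n) (sq_nonneg u)]

/-- For a degree-`d` polynomial `p` on `{0,1}ⁿ`,
`E[|p|] ≥ 3^{-d} · (E[p²])^{1/2}`. -/
theorem stmt_0 {n d : ℕ} (p : (Fin n → ZMod 2) → ℝ) (hp : IsDegLE d p) :
    ((3 : ℝ) ^ d)⁻¹ * Real.sqrt (cubeExp fun x => p x ^ 2) ≤ cubeExp fun x => |p x| := by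
  obtain ⟨c, hdeg, hpc⟩ := hp
  have hbon := bonami Finset.univ d c p hpc
    (fun ξ hξ => ⟨hdeg ξ hξ, fun j _ => Finset.mem_univ j⟩)
  set A := cubeExp fun x => |p x| with hA
  set B := cubeExp fun x => p x ^ 2 with hB
  set C := cubeExp fun x => |p x| * p x ^ 2 with hC
  set D := cubeExp fun x => p x ^ 4 with hD
  have hAn : 0 ≤ A := cubeExp_nonneg (fun x => abs_nonneg _)
  have hBn : 0 ≤ B := cubeExp_nonneg (fun x => sq_nonneg _)
  have hCn : 0 ≤ C := cubeExp_nonneg (fun x => mul_nonneg (abs_nonneg _) (sq_nonneg _))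
  have h1 : B ^ 2 ≤ A * C := by
    have h := cubeExp_sq_CS (fun x => Real.sqrt |p x|) (fun x => Real.sqrt |p x| * |p x|)
    have e0 : (fun x => Real.sqrt |p x| * (Real.sqrt |p x| * |p x|)) = fun x => p x ^ 2 := by
      funext x
      rw [← mul_assoc, Real.mul_self_sqrt (abs_nonneg _), abs_mul_abs_self, sq]
    have e1 : (fun x => Real.sqrt |p x| ^ 2) = fun x => |p x| := by
      funext x; exact Real.sq_sqrt (abs_nonneg _)
    have e2 : (fun x => (Real.sqrt |p x| * |p x|) ^ 2) = fun x => |p x| * p x ^ 2 := by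
      funext x
      have hs : Real.sqrt |p x| ^ 2 = |p x| := Real.sq_sqrt (abs_nonneg _)
      calc (Real.sqrt |p x| * |p x|) ^ 2 = Real.sqrt |p x| ^ 2 * |p x| ^ 2 := by ring
        _ = |p x| * |p x| ^ 2 := by rw [hs]
        _ = |p x| * p x ^ 2 := by rw [sq_abs]
    rw [e0, e1, e2] at h
    exact h
  have h2 : C ^ 2 ≤ B * D := by
    have h := cubeExp_sq_CS (fun x => |p x|) (fun x => p x ^ 2)
    have e1 : (fun x => |p x| ^ 2) = fun x => p x ^ 2 := by funext x; rw [sq_abs]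
    have e2 : (fun x => (p x ^ 2) ^ 2) = fun x => p x ^ 4 := by funext x; ring
    rw [e1, e2] at h
    exact h
  have h3 : D ≤ 9 ^ d * B ^ 2 := hbon
  have h9 : (9:ℝ) ^ d = (3 ^ d) ^ 2 := by
    rw [← pow_mul, mul_comm, pow_mul]; norm_num
  have key : B ≤ 9 ^ d * A ^ 2 := by
    by_cases hB0 : B = 0
    · rw [hB0]; positivity
    · have hBpos : 0 < B := lt_of_le_of_ne hBn (Ne.symm hB0)
      have hAC : 0 ≤ A * C := mul_nonneg hAn hCn
      have i1 : (B ^ 2) ^ 2 ≤ (A * C) ^ 2 := pow_le_pow_left₀ (sq_nonneg B) h1 2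
      have i3 : A ^ 2 * C ^ 2 ≤ A ^ 2 * (B * D) := mul_le_mul_of_nonneg_left h2 (sq_nonneg A)
      have i4 : A ^ 2 * (B * D) ≤ A ^ 2 * (B * (9 ^ d * B ^ 2)) := by
        apply mul_le_mul_of_nonneg_left _ (sq_nonneg A)
        exact mul_le_mul_of_nonneg_left h3 hBn
      have h4 : B ^ 4 ≤ 9 ^ d * A ^ 2 * B ^ 3 := by
        calc B ^ 4 = (B ^ 2) ^ 2 := by ring
          _ ≤ (A * C) ^ 2 := i1
          _ = A ^ 2 * C ^ 2 := by ring
          _ ≤ A ^ 2 * (B * D) := i3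
          _ ≤ A ^ 2 * (B * (9 ^ d * B ^ 2)) := i4
          _ = 9 ^ d * A ^ 2 * B ^ 3 := by ring
      nlinarith [h4, pow_pos hBpos 3]
  have hsB : Real.sqrt B ≤ 3 ^ d * A := by
    have hBle : B ≤ (3 ^ d * A) ^ 2 := by
      calc B ≤ 9 ^ d * A ^ 2 := key
        _ = (3 ^ d * A) ^ 2 := by rw [h9]; ring
    calc Real.sqrt B ≤ Real.sqrt ((3 ^ d * A) ^ 2) := Real.sqrt_le_sqrt hBle
      _ = 3 ^ d * A := Real.sqrt_sq (by positivity)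
  calc ((3 : ℝ) ^ d)⁻¹ * Real.sqrt B ≤ ((3 : ℝ) ^ d)⁻¹ * (3 ^ d * A) :=
        mul_le_mul_of_nonneg_left hsB (by positivity)
    _ = A := by field_simp
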